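/- For every polynomial w in the Smith–Kidger Type 1 space, the difference w|_{x₁=1} − Î^{x₁⁺}(w) equals w|_{x₁=−1} − Î^{x₁⁻}(w) as polynomials in (x₂,x₃), where Î^{x₁±} is the interpolation into span{1, x₂, x₃, x₂x₃, x₃²} matching values at the four vertices (±1,±1) and the center (0,0) of the face. -/
import Mathlib


open MvPolynomial

noncomputable def SK1 : Submodule ℝ (MvPolynomial (Fin 3) ℝ) :=
  MvPolynomial.restrictTotalDegree (Fin 3) ℝ 2 ⊔
    Submodule.span ℝ {X 0 * X 1 * X 2, X 0 ^ 2 * X 1, X 1 ^ 2 * X 2, X 2 ^ 2 * X 0}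

noncomputable def bub (x₂ x₃ : ℝ) : ℝ := 1 - x₃ ^ 2
noncomputable def q1 (x₂ x₃ : ℝ) : ℝ := (1 + x₂) * (1 + x₃) / 4
noncomputable def q2 (x₂ x₃ : ℝ) : ℝ := (1 - x₂) * (1 + x₃) / 4
noncomputable def q3 (x₂ x₃ : ℝ) : ℝ := (1 - x₂) * (1 - x₃) / 4
noncomputable def q4 (x₂ x₃ : ℝ) : ℝ := (1 + x₂) * (1 - x₃) / 4

/-- Face interpolation of a function `g` of the two face coordinates, at `(x₂,x₃)`. -/
noncomputable def interp (g : ℝ → ℝ → ℝ) (x₂ x₃ : ℝ) : ℝ :=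
  g 1 1 * (q1 x₂ x₃ - bub x₂ x₃ / 4) + g (-1) 1 * (q2 x₂ x₃ - bub x₂ x₃ / 4) +
    g (-1) (-1) * (q3 x₂ x₃ - bub x₂ x₃ / 4) + g 1 (-1) * (q4 x₂ x₃ - bub x₂ x₃ / 4) +
    g 0 0 * bub x₂ x₃

lemma eval_mono (d : Fin 3 →₀ ℕ) (r s y z : ℝ) :
    eval ![s, y, z] (monomial d r) = r * (s ^ d 0 * (y ^ d 1 * z ^ d 2)) := by
  rw [eval_monomial, Finsupp.prod_fintype _ _ (fun i => pow_zero _)]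
  simp [Fin.prod_univ_three, mul_assoc]

lemma key (a b c : ℕ) (h : a + b + c ≤ 2) (r y z : ℝ) :
    r * ((1:ℝ) ^ a * (y ^ b * z ^ c)) -
      interp (fun p q => r * ((1:ℝ) ^ a * (p ^ b * q ^ c))) y z =
    r * ((-1:ℝ) ^ a * (y ^ b * z ^ c)) -
      interp (fun p q => r * ((-1:ℝ) ^ a * (p ^ b * q ^ c))) y z := by
  unfold interp bub q1 q2 q3 q4
  have ha : a ≤ 2 := by omega
  have hb : b ≤ 2 := by omega
  have hc : c ≤ 2 := by omega
  interval_cases a <;> interval_cases b <;> interval_cases c <;> first | omega | (norm_num; ring) | norm_num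

noncomputable def Tsub : Submodule ℝ (MvPolynomial (Fin 3) ℝ) where
  carrier := {w | ∀ y z : ℝ,
      eval ![1, y, z] w - interp (fun a b => eval ![1, a, b] w) y z =
        eval ![-1, y, z] w - interp (fun a b => eval ![-1, a, b] w) y z}
  add_mem' := by
    intro p q hp hq y z
    have h1 := hp y z
    have h2 := hq y z
    simp only [map_add]
    have e1 : ∀ s : ℝ, interp (fun a b => eval ![s, a, b] p + eval ![s, a, b] q) y z =
        interp (fun a b => eval ![s, a, b] p) y z + interp (fun a b => eval ![s, a, b] q) y z := by
      intro s; unfold interp; ring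
    rw [e1, e1]
    linarith
  zero_mem' := by
    intro y z
    simp only [map_zero]
  smul_mem' := by
    intro c p hp y z
    have h1 := hp y z
    simp only [smul_eval, smul_eq_mul]
    have e1 : ∀ s : ℝ, interp (fun a b => c * eval ![s, a, b] p) y z =
        c * interp (fun a b => eval ![s, a, b] p) y z := by
      intro s; unfold interp; ring
    rw [e1, e1]
    linear_combination c * h1

theorem stmt10 (w : MvPolynomial (Fin 3) ℝ) (hw : w ∈ SK1) :
    ∀ y z : ℝ,
      eval ![1, y, z] w - interp (fun a b => eval ![1, a, b] w) y z =
        eval ![-1, y, z] w - interp (fun a b => eval ![-1, a, b] w) y z := by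
  suffices h : SK1 ≤ Tsub from h hw
  refine sup_le ?_ (Submodule.span_le.2 ?_)
  · intro p hp
    rw [MvPolynomial.mem_restrictTotalDegree] at hp
    rw [p.as_sum]
    refine Submodule.sum_mem _ fun d hd => ?_
    have hdeg : d 0 + d 1 + d 2 ≤ 2 := by
      have h1 := MvPolynomial.le_totalDegree hd
      rw [Finsupp.sum_fintype _ _ (fun i => rfl), Fin.sum_univ_three] at h1
      omega
    intro y z
    simp only [eval_mono]
    exact key _ _ _ hdeg _ y z
  · intro x hx
    simp only [Set.mem_insert_iff, Set.mem_singleton_iff] at hx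
    rcases hx with rfl | rfl | rfl | rfl <;> intro y z <;>
      simp only [eval_mul, eval_pow, eval_X, Matrix.cons_val_zero, Matrix.cons_val_one,
        Matrix.head_cons, Matrix.cons_val_two, Matrix.tail_cons] <;>
      first
        | (unfold interp bub q1 q2 q3 q4; ring)
        | rfl
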